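/- (Quaternionic Laurent-coefficient formula.) Let I ∈ ℍ be an imaginary unit, p₀ ∈ ℍ, and 0 ≤ R₁ < R₂ ≤ ∞. Let (a_n)_{n∈ℤ} be quaternions lying in the slice ℂ_I such that for every s with R₁ < s < R₂ both series Σ_{n≥0} ‖a_n‖·sⁿ and Σ_{n≥1} ‖a_{−n}‖·s^{−n} converge. Define f(p) = Σ_{n=0}^∞ a_n·(p − p₀)ⁿ + Σ_{n=1}^∞ a_{−n}·(p − p₀)^{−n} for R₁ < ‖p − p₀‖ < R₂. Then for every r with R₁ < r < R₂, with γ(t) = p₀ + r·exp(t·I) on [0, 2π], and every integer n: ∫_0^{2π} (γ(t) − p₀)^{−(n+1)} * f(γ(t)) * γ'(t) dt = 2π·I·a_n. -/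

import Mathlib

/-!
The slice `ℂ_I` is the image of the isometric `ℝ`-algebra embedding
`Complex.liftAux I hI : ℂ → ℍ` sending `i` to `I`. The coefficients, the circle `γ` and its
velocity all lie in this slice, so the integrand is the image of the complex integrand of
`∮ z^{-(n+1)} F(z) dz` over `|z| = r`, where `F(z) = ∑ b_k z^k` is the complex Laurent series
with `liftAux b_k = a_k`. The complex integral is computed term by term from `∮ z^k dz = 2πi` for
`k = -1` and `0` otherwise.
-/

open scoped Quaternion
open Complex Metric Real

theorem HasSum.mul_zpow_of_nat_of_inv_pow {K : Type*} [DivisionRing K] [TopologicalSpace K]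
    [IsTopologicalAddGroup K] {c : ℤ → K} {x a b : K}
    (hnat : HasSum (fun m : ℕ ↦ c m * x ^ m) a)
    (hneg : HasSum (fun m : ℕ ↦ c (-m - 1) * x⁻¹ ^ (m + 1)) b) :
    HasSum (fun k : ℤ ↦ c k * x ^ k) (a + b) := by
  refine HasSum.of_nat_of_neg_add_one (by simpa only [zpow_natCast] using hnat) ?_
  convert hneg using 2 with m
  rw [← neg_add', zpow_neg, ← Nat.cast_succ, zpow_natCast, inv_pow]

theorem map_tsum_mul_zpow {K L F : Type*} [NormedDivisionRing K] [CompleteSpace K]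
    [DivisionRing L] [TopologicalSpace L] [T2Space L] [FunLike F K L] [RingHomClass F K L]
    (φ : F) (hφ : Continuous φ) {c : ℤ → K} {x : K}
    (hnat : Summable fun m : ℕ ↦ ‖c m‖ * ‖x‖ ^ m)
    (hneg : Summable fun m : ℕ ↦ ‖c (-m - 1)‖ * ‖x‖⁻¹ ^ (m + 1)) :
    φ (∑' k : ℤ, c k * x ^ k) =
      ∑' m : ℕ, φ (c m) * φ x ^ m +
        ∑' m : ℕ, φ (c (-m - 1)) * (φ x)⁻¹ ^ (m + 1) := by
  have hnat' : Summable fun m : ℕ ↦ c m * x ^ m :=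
    .of_norm (by simpa only [norm_mul, norm_pow] using hnat)
  have hneg' : Summable fun m : ℕ ↦ c (-m - 1) * x⁻¹ ^ (m + 1) :=
    .of_norm (by simpa only [norm_mul, norm_pow, norm_inv] using hneg)
  rw [(hnat'.hasSum.mul_zpow_of_nat_of_inv_pow hneg'.hasSum).tsum_eq, map_add,
    ← (hnat'.hasSum.map φ hφ).tsum_eq, ← (hneg'.hasSum.map φ hφ).tsum_eq]
  simp only [Function.comp_def, map_mul, map_pow, map_inv₀]

namespace circleIntegral

theorem hasSum_integral_of_norm_le {E ι : Type*} [NormedAddCommGroup E] [NormedSpace ℂ E]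
    [CompleteSpace E] [Countable ι] {g : ι → ℂ → E} {c : ℂ} {R : ℝ} {C : ι → ℝ}
    (hg : ∀ i, ContinuousOn (g i) (sphere c |R|))
    (hgC : ∀ i, ∀ z ∈ sphere c |R|, ‖g i z‖ ≤ C i) (hC : Summable C) :
    HasSum (fun i ↦ ∮ z in C(c, R), g i z) (∮ z in C(c, R), ∑' i, g i z) := by
  have hbound :
      ∀ i θ, ‖deriv (circleMap c R) θ • g i (circleMap c R θ)‖ ≤ |R| * C i := by
    intro i θ
    rw [norm_smul, deriv_circleMap, norm_mul, norm_circleMap_zero, norm_I, mul_one]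
    exact mul_le_mul_of_nonneg_left (hgC i _ (circleMap_mem_sphere' c R θ)) (abs_nonneg R)
  refine intervalIntegral.hasSum_integral_of_dominated_convergence (fun i _ ↦ |R| * C i)
    (fun i ↦ ((hg i).circleIntegrable').out.def'.aestronglyMeasurable)
    (fun i ↦ .of_forall fun θ _ ↦ hbound i θ) (.of_forall fun _ _ ↦ hC.mul_left _)
    intervalIntegrable_const (.of_forall fun θ _ ↦ ?_)
  have hsum : Summable fun i ↦ g i (circleMap c R θ) :=
    .of_norm_bounded hC fun i ↦ hgC i _ (circleMap_mem_sphere' c R θ)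
  exact hsum.hasSum.const_smul _

theorem integral_zpow_eq_ite {R : ℝ} (hR : 0 < R) (k : ℤ) :
    (∮ z in C(0, R), z ^ k) = if k = -1 then 2 * π * I else 0 := by
  split_ifs with hk
  · simpa [hk] using integral_sub_inv_of_mem_ball (c := 0) (w := 0) (mem_ball_self hR)
  · simpa using integral_sub_zpow_of_ne hk 0 0 R

theorem integral_zpow_mul_tsum_zpow {b : ℤ → ℂ} {R : ℝ} (hR : 0 < R)
    (hb : Summable fun k ↦ ‖b k‖ * R ^ k) (n : ℤ) :
    (∮ z in C(0, R), z ^ (-(n + 1)) * ∑' k, b k * z ^ k) = 2 * π * I * b n := by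
  have hsphere : ∀ z ∈ sphere (0 : ℂ) |R|, z ≠ 0 ∧ ‖z‖ = R := fun z hz ↦ by
    rw [mem_sphere_zero_iff_norm, abs_of_pos hR] at hz
    exact ⟨ne_zero_of_norm_ne_zero (hz ▸ hR.ne'), hz⟩
  have hshift : Set.EqOn (fun z ↦ z ^ (-(n + 1)) * ∑' k, b k * z ^ k)
      (fun z ↦ ∑' k, b k * z ^ (k - (n + 1))) (sphere 0 R) := fun z hz ↦ by
    rw [← abs_of_pos hR] at hz
    simp only [← tsum_mul_left, sub_eq_neg_add, zpow_add₀ (hsphere z hz).1]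
    ring_nf
  have hterms : HasSum (fun k ↦ ∮ z in C(0, R), b k * z ^ (k - (n + 1)))
      (∮ z in C(0, R), ∑' k, b k * z ^ (k - (n + 1))) := by
    refine hasSum_integral_of_norm_le (C := fun k ↦ ‖b k‖ * R ^ (k - (n + 1)))
      (fun k ↦ ?_) (fun k z hz ↦ ?_) ?_
    · exact continuousOn_const.mul (continuousOn_id.zpow₀ _ fun z hz ↦ .inl (hsphere z hz).1)
    · rw [norm_mul, norm_zpow, (hsphere z hz).2]
    · simpa only [sub_eq_add_neg, zpow_add₀ hR.ne', ← mul_assoc]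
        using hb.mul_right (R ^ (-(n + 1)))
  rw [integral_congr hR.le hshift]
  refine hterms.unique ?_
  convert hasSum_single n fun k hk ↦ ?_ using 1
  · rw [integral_const_mul, integral_zpow_eq_ite hR, if_pos (by ring)]
    ring
  · rw [integral_const_mul, integral_zpow_eq_ite hR, if_neg (by omega), mul_zero]

end circleIntegral

namespace Quaternion

variable {I : ℍ[ℝ]}

theorem re_eq_zero_of_mul_self_eq_neg_one (hI : I * I = -1) : I.re = 0 := by
  have hnorm : ‖I‖ = 1 := by
    have h := congrArg norm hI
    rw [norm_mul, norm_neg, norm_one] at h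
    nlinarith [norm_nonneg I]
  refine sq_eq_neg_normSq.mp ?_
  rw [sq, hI, normSq_eq_norm_mul_self, hnorm, mul_one]
  norm_num

theorem star_liftAux (hI : I * I = -1) (z : ℂ) :
    star (Complex.liftAux I hI z) = Complex.liftAux I hI (starRingEnd ℂ z) := by
  have hstar : star I = -I := star_eq_neg.mpr (re_eq_zero_of_mul_self_eq_neg_one hI)
  simp [liftAux_apply, hstar, algebraMap_def]

theorem norm_liftAux (hI : I * I = -1) (z : ℂ) : ‖Complex.liftAux I hI z‖ = ‖z‖ := by
  have hsq : normSq (Complex.liftAux I hI z) = Complex.normSq z := by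
    apply coe_injective
    rw [← self_mul_star, star_liftAux, ← map_mul, mul_conj, ← Complex.coe_algebraMap,
      AlgHom.commutes, algebraMap_def]
  rw [normSq_eq_norm_mul_self, Complex.normSq_eq_norm_sq, sq] at hsq
  exact (mul_self_inj (norm_nonneg _) (norm_nonneg _)).mp hsq

def sliceIsometry (hI : I * I = -1) : ℂ →ₗᵢ[ℝ] ℍ[ℝ] where
  toLinearMap := (Complex.liftAux I hI).toLinearMap
  norm_map' := norm_liftAux hI

theorem continuous_liftAux (hI : I * I = -1) : Continuous (Complex.liftAux I hI) :=
  (sliceIsometry hI).continuous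

theorem exists_liftAux_eq (hI : I * I = -1) {q : ℍ[ℝ]}
    (hq : ∃ x v : ℝ, q = (x : ℍ[ℝ]) + v • I) :
    ∃ z, Complex.liftAux I hI z = q := by
  obtain ⟨x, v, rfl⟩ := hq
  exact ⟨x + v * Complex.I, by simp [liftAux_apply, algebraMap_def]⟩

theorem liftAux_circleMap_zero (hI : I * I = -1) (r t : ℝ) :
    Complex.liftAux I hI (circleMap 0 r t) = r • NormedSpace.exp (t • I) := by
  rw [circleMap_zero, ← Complex.real_smul, map_smul, Complex.exp_eq_exp_ℂ,
    NormedSpace.map_exp _ (continuous_liftAux hI), ← Complex.real_smul, map_smul,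
    liftAux_apply_I]

theorem liftAux_deriv_circleMap_zero (hI : I * I = -1) (r t : ℝ) :
    Complex.liftAux I hI (deriv (circleMap 0 r) t) = r • (I * NormedSpace.exp (t • I)) := by
  rw [deriv_circleMap, mul_comm, map_mul, liftAux_apply_I, liftAux_circleMap_zero,
    mul_smul_comm]

theorem intervalIntegral_liftAux_mul_deriv_circleMap (hI : I * I = -1) (g : ℂ → ℂ) (c : ℂ)
    (R : ℝ) :
    ∫ θ in (0 : ℝ)..2 * π,
        Complex.liftAux I hI (g (circleMap c R θ)) *
          Complex.liftAux I hI (deriv (circleMap c R) θ)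
      = Complex.liftAux I hI (∮ z in C(c, R), g z) := by
  refine (intervalIntegral.integral_congr fun θ _ ↦ ?_).trans
    ((sliceIsometry hI).intervalIntegral_comp_comm _)
  change _ = Complex.liftAux I hI (_ • _)
  rw [smul_eq_mul, mul_comm, map_mul]

end Quaternion

theorem quaternion_laurent_coefficient_formula_general
    (I : ℍ[ℝ]) (hI : I * I = -1) (p₀ : ℍ[ℝ])
    (R₁ : ℝ) (R₂ : ENNReal) (hR₁ : 0 ≤ R₁)
    (a : ℤ → ℍ[ℝ]) (ha : ∀ n : ℤ, ∃ x v : ℝ, a n = (x : ℍ[ℝ]) + v • I)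
    (hsumPos : ∀ s : ℝ, R₁ < s → ENNReal.ofReal s < R₂ →
      Summable (fun n : ℕ => ‖a (n : ℤ)‖ * s ^ n))
    (hsumNeg : ∀ s : ℝ, R₁ < s → ENNReal.ofReal s < R₂ →
      Summable (fun n : ℕ => ‖a (-(n : ℤ) - 1)‖ * s⁻¹ ^ (n + 1)))
    (f : ℍ[ℝ] → ℍ[ℝ])
    (hf : ∀ p : ℍ[ℝ], R₁ < ‖p - p₀‖ → ENNReal.ofReal ‖p - p₀‖ < R₂ →
      f p = (∑' n : ℕ, a (n : ℤ) * (p - p₀) ^ n)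
        + ∑' n : ℕ, a (-(n : ℤ) - 1) * ((p - p₀)⁻¹) ^ (n + 1))
    (r : ℝ) (hr₁ : R₁ < r) (hr₂ : ENNReal.ofReal r < R₂)
    (γ γ' : ℝ → ℍ[ℝ])
    (hγ : ∀ t, γ t = p₀ + r • NormedSpace.exp (t • I))
    (hγ' : ∀ t, γ' t = r • (I * NormedSpace.exp (t • I)))
    (n : ℤ) :
    ∫ t in (0:ℝ)..(2 * Real.pi), (γ t - p₀) ^ (-(n + 1)) * f (γ t) * γ' t
      = (2 * Real.pi) • (I * a n) := by
  have hr : 0 < r := hR₁.trans_lt hr₁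
  choose b hb using fun k ↦ Quaternion.exists_liftAux_eq hI (ha k)
  have hbnorm : ∀ k, ‖b k‖ = ‖a k‖ := fun k ↦ by rw [← hb, Quaternion.norm_liftAux]
  have hbnat : Summable fun m : ℕ ↦ ‖b m‖ * r ^ m := by
    simpa only [hbnorm] using hsumPos r hr₁ hr₂
  have hbneg : Summable fun m : ℕ ↦ ‖b (-m - 1)‖ * r⁻¹ ^ (m + 1) := by
    simpa only [hbnorm] using hsumNeg r hr₁ hr₂
  have hbint : Summable fun k : ℤ ↦ ‖b k‖ * r ^ k :=
    (HasSum.mul_zpow_of_nat_of_inv_pow (c := fun k ↦ ‖b k‖) hbnat.hasSum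
      hbneg.hasSum).summable
  have hnorm : ∀ t, ‖circleMap 0 r t‖ = r := fun t ↦ by
    rw [norm_circleMap_zero, abs_of_pos hr]
  have hcircle : ∀ t, γ t - p₀ = liftAux I hI (circleMap 0 r t) := fun t ↦ by
    rw [hγ, add_sub_cancel_left, Quaternion.liftAux_circleMap_zero]
  have hf_circle :
      ∀ t, f (γ t) = liftAux I hI (∑' k : ℤ, b k * circleMap 0 r t ^ k) := fun t ↦ by
    have hr_circle : ‖γ t - p₀‖ = r := by rw [hcircle, Quaternion.norm_liftAux, hnorm]
    rw [map_tsum_mul_zpow (liftAux I hI) (Quaternion.continuous_liftAux hI) (by rwa [hnorm])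
      (by rwa [hnorm]), hf _ (hr_circle ▸ hr₁) (hr_circle ▸ hr₂)]
    simp only [hb, hcircle]
  calc ∫ t in (0:ℝ)..(2 * Real.pi), (γ t - p₀) ^ (-(n + 1)) * f (γ t) * γ' t
      = ∫ t in (0:ℝ)..(2 * Real.pi),
          liftAux I hI (circleMap 0 r t ^ (-(n + 1)) * ∑' k : ℤ, b k * circleMap 0 r t ^ k) *
            liftAux I hI (deriv (circleMap 0 r) t) := by
        simp only [hcircle, hf_circle, hγ', ← Quaternion.liftAux_deriv_circleMap_zero hI,
          ← map_zpow₀, ← map_mul]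
    _ = liftAux I hI (∮ z in C(0, r), z ^ (-(n + 1)) * ∑' k : ℤ, b k * z ^ k) :=
        Quaternion.intervalIntegral_liftAux_mul_deriv_circleMap hI
          (fun z ↦ z ^ (-(n + 1)) * ∑' k : ℤ, b k * z ^ k) 0 r
    _ = liftAux I hI (2 * π * Complex.I * b n) := by
        rw [circleIntegral.integral_zpow_mul_tsum_zpow hr hbint]
    _ = (2 * Real.pi) • (I * a n) := by
        rw [mul_assoc, ← ofReal_ofNat, ← ofReal_mul, ← real_smul, map_smul, map_mul,
          liftAux_apply_I, hb]

theorem quaternion_laurent_coefficient_formula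
    (I : ℍ[ℝ]) (hI : I * I = -1) (p₀ : ℍ[ℝ])
    (R₁ : ℝ) (R₂ : ENNReal) (hR₁ : 0 ≤ R₁) (hR₁₂ : ENNReal.ofReal R₁ < R₂)
    (a : ℤ → ℍ[ℝ]) (ha : ∀ n : ℤ, ∃ x v : ℝ, a n = (x : ℍ[ℝ]) + v • I)
    (hsumPos : ∀ s : ℝ, R₁ < s → ENNReal.ofReal s < R₂ →
      Summable (fun n : ℕ => ‖a (n : ℤ)‖ * s ^ n))
    (hsumNeg : ∀ s : ℝ, R₁ < s → ENNReal.ofReal s < R₂ →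
      Summable (fun n : ℕ => ‖a (-(n : ℤ) - 1)‖ * s⁻¹ ^ (n + 1)))
    (f : ℍ[ℝ] → ℍ[ℝ])
    (hf : ∀ p : ℍ[ℝ], R₁ < ‖p - p₀‖ → ENNReal.ofReal ‖p - p₀‖ < R₂ →
      f p = (∑' n : ℕ, a (n : ℤ) * (p - p₀) ^ n)
        + ∑' n : ℕ, a (-(n : ℤ) - 1) * ((p - p₀)⁻¹) ^ (n + 1))
    (r : ℝ) (hr₁ : R₁ < r) (hr₂ : ENNReal.ofReal r < R₂)
    (γ γ' : ℝ → ℍ[ℝ])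
    (hγ : ∀ t, γ t = p₀ + r • NormedSpace.exp (t • I))
    (hγ' : ∀ t, γ' t = r • (I * NormedSpace.exp (t • I)))
    (n : ℤ) :
    ∫ t in (0:ℝ)..(2 * Real.pi), (γ t - p₀) ^ (-(n + 1)) * f (γ t) * γ' t
      = (2 * Real.pi) • (I * a n) :=
  quaternion_laurent_coefficient_formula_general I hI p₀ R₁ R₂ hR₁ a ha hsumPos hsumNeg f hf r hr₁
    hr₂ γ γ' hγ hγ' n
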